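/- Let C(r) = B̂^av(r) ∩ C for r ≥ γℓ, and let C^π(r) be the multiset of punctured representatives { π(x) : x+K ∈ C(r) } ⊆ 𝒜^{s−ℓ}. Then |C(r)|(|C(r)|−1)(d − γℓ) ≤ ∑_{u,v ∈ C^π(r)} w(u − v). -/

import Mathlib

open Finset MulOpposite
open scoped Classical

/-!
For distinct codewords `x + K ≠ y + K` of `C(r)`, every word of the coset `x - y + K` has weight
at least `d`, hence so does the average weight of the coset. On each coordinate of `supp K` the
projection of `K` is a nonzero left submodule of `A`, over whose translates the homogeneous weight
averages to `γ` because `χ` generates `A`; the other coordinates are constant on the coset. So the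
average is `γℓ + w(π(x - y))`, giving `d - γℓ ≤ w(π(x - y))`. Summing over ordered pairs of
distinct codewords (the diagonal contributes `w 0 = 0`) gives the bound.
-/

section HomogeneousWeight

variable {R A : Type*} [Ring R] [AddCommGroup A] [Module Rᵐᵒᵖ A]

section

variable [Fintype R] [DecidableEq R]

variable (R) in
/-- `w` is the homogeneous weight on `A` with average value `γ` (when `χ` is a generating
character). -/
def IsHomogeneousWeight (χ : AddChar A ℂ) (γ : ℝ) (w : A → ℝ) : Prop :=
  ∀ a : A, (w a : ℂ) =
    (γ : ℂ) * (1 - (Fintype.card Rˣ : ℂ)⁻¹ * ∑ u : Rˣ, χ (op (u : R) • a))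

lemma IsHomogeneousWeight.map_zero {χ : AddChar A ℂ} {γ : ℝ} {w : A → ℝ}
    (hw : IsHomogeneousWeight R χ γ w) : w 0 = 0 := by
  simpa using hw 0

end

variable [Module R A] [SMulCommClass R Rᵐᵒᵖ A]

def opSMulLinearMap (r : R) : A →ₗ[R] A :=
  haveI := SMulCommClass.symm R Rᵐᵒᵖ A
  DistribSMul.toLinearMap R A (op r)

@[simp]
lemma opSMulLinearMap_apply (r : R) (a : A) : opSMulLinearMap r a = op r • a := rfl

lemma opSMulLinearMap_unit_injective (u : Rˣ) :
    Function.Injective (opSMulLinearMap (u : R) : A →ₗ[R] A) := by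
  intro a b hab
  simpa [smul_smul, ← op_mul] using congrArg (op ((u⁻¹ : Rˣ) : R) • ·) hab

/-- The range of `g ↦ φ g * u` is a nonzero left submodule, so the generating character `χ`
is nontrivial on it. -/
lemma sum_addChar_opSMul_linearMap_eq_zero (χ : AddChar A ℂ)
    (hgen : ∀ N : Submodule R A, (∀ x ∈ N, χ x = 1) → N = ⊥)
    {G : Type*} [AddCommGroup G] [Module R G] [Fintype G]
    {φ : G →ₗ[R] A} (hφ : φ ≠ 0) (u : Rˣ) :
    ∑ g, χ (op (u : R) • φ g) = 0 := by
  set ψ := opSMulLinearMap (u : R) ∘ₗ φ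
  refine AddChar.sum_eq_zero_iff_ne_zero (ψ := χ.compAddMonoidHom ψ.toAddMonoidHom) |>.mpr
    fun htriv => hφ ?_
  have hrange : LinearMap.range ψ = ⊥ := hgen _ <| by
    rintro _ ⟨g, rfl⟩
    exact DFunLike.congr_fun htriv g
  ext g
  have hψg : ψ g = 0 := LinearMap.congr_fun (LinearMap.range_eq_bot.mp hrange) g
  exact (injective_iff_map_eq_zero _).mp (opSMulLinearMap_unit_injective u) _ hψg

variable [Fintype R] [DecidableEq R] {χ : AddChar A ℂ} {γ : ℝ} {w : A → ℝ}

/-- The homogeneous weight averages to `γ` over every translate of a nonzero left submodule. -/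
lemma IsHomogeneousWeight.sum_add_linearMap (hw : IsHomogeneousWeight R χ γ w)
    (hgen : ∀ N : Submodule R A, (∀ x ∈ N, χ x = 1) → N = ⊥)
    {G : Type*} [AddCommGroup G] [Module R G] [Fintype G]
    {φ : G →ₗ[R] A} (hφ : φ ≠ 0) (a : A) :
    ∑ g, w (a + φ g) = Fintype.card G * γ := by
  have hchar : ∀ u : Rˣ, ∑ g, χ (op (u : R) • a) * χ (op (u : R) • φ g) = 0 := fun u => by
    rw [← mul_sum, sum_addChar_opSMul_linearMap_eq_zero χ hgen hφ u, mul_zero]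
  have hC : ((∑ g, w (a + φ g) : ℝ) : ℂ) = ((Fintype.card G * γ : ℝ) : ℂ) := by
    push_cast
    calc ∑ g, (w (a + φ g) : ℂ)
        = ∑ g, (γ : ℂ) * (1 - (Fintype.card Rˣ : ℂ)⁻¹ *
            ∑ u : Rˣ, χ (op (u : R) • a) * χ (op (u : R) • φ g)) := by
          refine sum_congr rfl fun g _ => ?_
          simp only [hw (a + φ g), smul_add, AddChar.map_add_eq_mul]
      _ = γ * (Fintype.card G - (Fintype.card Rˣ : ℂ)⁻¹ *
            ∑ u : Rˣ, ∑ g, χ (op (u : R) • a) * χ (op (u : R) • φ g)) := by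
          rw [← mul_sum, sum_sub_distrib, ← mul_sum, sum_comm]
          simp
      _ = Fintype.card G * γ := by simp [hchar, mul_comm]
  exact_mod_cast hC

end HomogeneousWeight

section Coset

variable {R A ι : Type*} [Ring R] [AddCommGroup A] [Module R A] [Fintype ι]

/-- The support `supp K` of the code `K`. -/
noncomputable def coordSupport (K : Submodule R (ι → A)) : Finset ι :=
  univ.filter fun i => ∃ z ∈ K, z i ≠ 0

lemma proj_comp_subtype_ne_zero {K : Submodule R (ι → A)} {i : ι} (hi : i ∈ coordSupport K) :
    LinearMap.proj i ∘ₗ K.subtype ≠ 0 := by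
  obtain ⟨z, hzK, hzi⟩ := (mem_filter.mp hi).2
  exact fun h => hzi (LinearMap.congr_fun h ⟨z, hzK⟩)

lemma apply_eq_zero_of_notMem_coordSupport {K : Submodule R (ι → A)} {i : ι}
    (hi : i ∉ coordSupport K) (k : K) : (k : ι → A) i = 0 := by
  by_contra h
  exact hi (mem_filter.mpr ⟨mem_univ i, k, k.2, h⟩)

variable [DecidableEq ι] [Fintype R] [DecidableEq R] [Module Rᵐᵒᵖ A] [SMulCommClass R Rᵐᵒᵖ A]
  {χ : AddChar A ℂ} {γ : ℝ} {w : A → ℝ}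

/-- The coset average weight formula `ŵ(z + K) = γℓ + w(π z)`, multiplied by `|K|`. -/
lemma IsHomogeneousWeight.sum_coset (hw : IsHomogeneousWeight R χ γ w)
    (hgen : ∀ N : Submodule R A, (∀ x ∈ N, χ x = 1) → N = ⊥)
    (K : Submodule R (ι → A)) [Fintype K] (z : ι → A) :
    ∑ k : K, ∑ i, w (z i + (k : ι → A) i) =
      Fintype.card K * (γ * #(coordSupport K) + ∑ i ∈ univ \ coordSupport K, w (z i)) := by
  have hsupp : ∀ i ∈ coordSupport K, ∑ k : K, w (z i + (k : ι → A) i) = Fintype.card K * γ :=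
    fun i hi => hw.sum_add_linearMap hgen (proj_comp_subtype_ne_zero hi) (z i)
  have hcompl : ∀ i ∈ univ \ coordSupport K,
      ∑ k : K, w (z i + (k : ι → A) i) = Fintype.card K * w (z i) := fun i hi => by
    simp [apply_eq_zero_of_notMem_coordSupport (mem_sdiff.mp hi).2]
  rw [sum_comm, ← sum_sdiff (subset_univ (coordSupport K)), sum_congr rfl hsupp,
    sum_congr rfl hcompl, ← mul_sum, sum_const, nsmul_eq_mul]
  ring

lemma IsHomogeneousWeight.le_add_sum_compl_coordSupport (hw : IsHomogeneousWeight R χ γ w)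
    (hgen : ∀ N : Submodule R A, (∀ x ∈ N, χ x = 1) → N = ⊥)
    {K : Submodule R (ι → A)} [Fintype K] {z : ι → A} {d : ℝ}
    (hd : ∀ k ∈ K, d ≤ ∑ i, w (z i + k i)) :
    d ≤ γ * #(coordSupport K) + ∑ i ∈ univ \ coordSupport K, w (z i) := by
  have hsum : Fintype.card K * d ≤ ∑ k : K, ∑ i, w (z i + (k : ι → A) i) := by
    simpa using card_nsmul_le_sum (univ : Finset K) _ d fun k _ => hd k k.2
  rw [hw.sum_coset hgen] at hsum
  exact le_of_mul_le_mul_left hsum (by exact_mod_cast Fintype.card_pos)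

end Coset

lemma Finset.card_mul_card_sub_one_mul_le_sum {α : Type*} (T : Finset α) (f : α → α → ℝ)
    {δ : ℝ} (hdiag : ∀ a ∈ T, f a a = 0) (hoff : ∀ a ∈ T, ∀ b ∈ T, a ≠ b → δ ≤ f a b) :
    #T * (#T - 1 : ℝ) * δ ≤ ∑ a ∈ T, ∑ b ∈ T, f a b := by
  have hrow : ∀ a ∈ T, (#T - 1 : ℝ) * δ ≤ ∑ b ∈ T, f a b := fun a ha => by
    rw [← add_sum_erase T _ ha, hdiag a ha, zero_add]
    have := card_nsmul_le_sum (T.erase a) (f a) δ fun b hb =>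
      hoff a ha b (mem_of_mem_erase hb) (ne_of_mem_erase hb).symm
    rwa [card_erase_of_mem ha, nsmul_eq_mul, Nat.cast_sub (card_pos.mpr ⟨a, ha⟩),
      Nat.cast_one] at this
  calc #T * (#T - 1 : ℝ) * δ = ∑ _a ∈ T, (#T - 1 : ℝ) * δ := by
        rw [sum_const, nsmul_eq_mul, mul_assoc]
    _ ≤ ∑ a ∈ T, ∑ b ∈ T, f a b := sum_le_sum hrow

theorem stmt15_general {R A : Type*} [Ring R] [Fintype R] [DecidableEq R]
    [AddCommGroup A] [Module R A] [Module Rᵐᵒᵖ A] [SMulCommClass R Rᵐᵒᵖ A] [Fintype A]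
    (χ : AddChar A ℂ)
    (hgenL : ∀ N : Submodule R A, (∀ x ∈ N, χ x = 1) → N = ⊥)
    (γ : ℝ) (w : A → ℝ)
    (hw : ∀ a : A, (w a : ℂ) =
      (γ : ℂ) * (1 - (Fintype.card Rˣ : ℂ)⁻¹ * ∑ u : Rˣ, χ (op (u : R) • a)))
    (s ℓ : ℕ) (K : Submodule R (Fin s → A))
    (hℓ : (univ.filter fun i : Fin s => ∃ z ∈ K, z i ≠ 0).card = ℓ)
    (C : Finset ((Fin s → A) ⧸ K))
    (d : ℝ)
    (hd_le : ∀ c ∈ C, ∀ c' ∈ C, c ≠ c' → ∀ z : Fin s → A,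
      (Submodule.Quotient.mk z : (Fin s → A) ⧸ K) = c - c' → d ≤ ∑ i, w (z i))
    (r : ℝ) :
    ∀ Cr : Finset ((Fin s → A) ⧸ K),
      Cr = (C.filter fun q => ∃ z : Fin s → A,
          (Submodule.Quotient.mk z : (Fin s → A) ⧸ K) = q ∧
            (Nat.card K : ℝ)⁻¹ * ∑ k : K, ∑ i, w (z i + (k : Fin s → A) i) ≤ r) →
      (Cr.card : ℝ) * ((Cr.card : ℝ) - 1) * (d - γ * ℓ) ≤
        ∑ c ∈ Cr, ∑ c' ∈ Cr,
          ∑ i ∈ univ \ (univ.filter fun i : Fin s => ∃ z ∈ K, z i ≠ 0),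
            w ((Quotient.out c) i - (Quotient.out c') i) := by
  rintro Cr rfl
  have hw : IsHomogeneousWeight R χ γ w := hw
  refine card_mul_card_sub_one_mul_le_sum _ _ (fun c _ => by simp [hw.map_zero]) ?_
  intro c hc c' hc' hne
  have hcoset : ∀ k ∈ K, d ≤ ∑ i, w ((c.out - c'.out) i + k i) := fun k hk =>
    hd_le c (mem_filter.mp hc).1 c' (mem_filter.mp hc').1 hne (c.out - c'.out + k) <| by
      rw [Submodule.Quotient.mk_add, (Submodule.Quotient.mk_eq_zero K).mpr hk, add_zero,
        Submodule.Quotient.mk_sub]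
      exact congrArg₂ _ c.out_eq c'.out_eq
  -- the two filters differ only in their `Decidable` instances
  have hsupp : (univ.filter fun i : Fin s => ∃ z ∈ K, z i ≠ 0) = coordSupport K := by
    unfold coordSupport
    congr
  have := hw.le_add_sum_compl_coordSupport hgenL hcoset
  rw [hsupp] at hℓ ⊢
  rw [← hℓ, sub_le_iff_le_add']
  exact this

/-- with `C(r) = B̂^av(r) ∩ C` (for `r ≥ γℓ`) and `C^π(r)` the multiset
of representatives punctured on `supp K`,
`|C(r)|(|C(r)|−1)(d − γℓ) ≤ ∑_{u,v ∈ C^π(r)} w(u − v)`. -/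
theorem stmt15 {R A : Type*} [Ring R] [Fintype R] [DecidableEq R]
    [AddCommGroup A] [Module R A] [Module Rᵐᵒᵖ A] [SMulCommClass R Rᵐᵒᵖ A] [Fintype A]
    (χ : AddChar A ℂ)
    (hgenL : ∀ N : Submodule R A, (∀ x ∈ N, χ x = 1) → N = ⊥)
    (hgenR : ∀ N : Submodule Rᵐᵒᵖ A, (∀ x ∈ N, χ x = 1) → N = ⊥)
    (hcard : Fintype.card A = Fintype.card R)
    (γ : ℝ) (w : A → ℝ)
    (hw : ∀ a : A, (w a : ℂ) =
      (γ : ℂ) * (1 - (Fintype.card Rˣ : ℂ)⁻¹ * ∑ u : Rˣ, χ (op (u : R) • a)))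
    (s ℓ : ℕ) (K : Submodule R (Fin s → A))
    (hKright : ∀ (r : R), ∀ z ∈ K, (op r • z : Fin s → A) ∈ K)
    (hℓ : (univ.filter fun i : Fin s => ∃ z ∈ K, z i ≠ 0).card = ℓ)
    (C : Finset ((Fin s → A) ⧸ K))
    (d : ℝ)
    (hd_le : ∀ c ∈ C, ∀ c' ∈ C, c ≠ c' → ∀ z : Fin s → A,
      (Submodule.Quotient.mk z : (Fin s → A) ⧸ K) = c - c' → d ≤ ∑ i, w (z i))
    (hd_ex : ∃ c ∈ C, ∃ c' ∈ C, c ≠ c' ∧ ∃ z : Fin s → A,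
      (Submodule.Quotient.mk z : (Fin s → A) ⧸ K) = c - c' ∧ ∑ i, w (z i) = d)
    (r : ℝ) (hr : γ * ℓ ≤ r) :
    ∀ Cr : Finset ((Fin s → A) ⧸ K),
      Cr = (C.filter fun q => ∃ z : Fin s → A,
          (Submodule.Quotient.mk z : (Fin s → A) ⧸ K) = q ∧
            (Nat.card K : ℝ)⁻¹ * ∑ k : K, ∑ i, w (z i + (k : Fin s → A) i) ≤ r) →
      (Cr.card : ℝ) * ((Cr.card : ℝ) - 1) * (d - γ * ℓ) ≤
        ∑ c ∈ Cr, ∑ c' ∈ Cr,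
          ∑ i ∈ univ \ (univ.filter fun i : Fin s => ∃ z ∈ K, z i ≠ 0),
            w ((Quotient.out c) i - (Quotient.out c') i) :=
  stmt15_general χ hgenL γ w hw s ℓ K hℓ C d hd_le r
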